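/- Fix integers k ≥ 1, n ≥ 1, nonnegative integers s₁,…,s_k, t₁,…,t_k, d₁,…,d_k and nonnegative integers e_{i,j} = e_{j,i} for i ≠ j in {1,…,k}, such that for every i: d_i = s_i + t_i, d_i = Σ_{j≠i} e_{i,j}, s_i + t_i > 0, and Σ_{j≠i} e_{i,j} > 0. Let α₁,…,α_k, β₁,…,β_k be permutations of {1,…,2n} such that at least one of α₁,…,α_k,β₁,…,β_k is connected. Then for every flow f in the associated flow network, F_{n,n}(α,β) ≥ |f|·(2n − 2) + 2; equivalently X(2n−2) − F_{n,n}(α,β) ≤ −2 where X is the maximum value of a flow. -/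

import Mathlib

/-!
For a permutation `σ` of a finite set of size `m`, `cycleCount σ` is the number of cycles
(fixed points count as cycles) and `permLen σ = m - cycleCount σ` (the minimal number of
transpositions needed to write `σ`).  We model `{1,…,2n}` as `Fin n ⊕ Fin n`, the first
summand being `{1,…,n}` and the second `{n+1,…,2n}`.  `gammaNN n` is the product of the
two `n`-cycles `(1,2,…,n)` and `(n+1,…,2n)`.
-/

/-- The number of cycles of a permutation, where fixed points count as cycles. -/
noncomputable def cycleCount {α : Type*} [Fintype α] [DecidableEq α]
    (σ : Equiv.Perm α) : ℕ :=
  Multiset.card σ.cycleType + (Fintype.card α - σ.support.card)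

/-- `|σ| = m - #(σ)`, the minimal number of transpositions whose product is `σ`. -/
noncomputable def permLen {α : Type*} [Fintype α] [DecidableEq α]
    (σ : Equiv.Perm α) : ℕ :=
  Fintype.card α - cycleCount σ

/-- `γ_{n,n}`: the product of the two `n`-cycles `(1,…,n)` and `(n+1,…,2n)`. -/
def gammaNN (n : ℕ) : Equiv.Perm (Fin n ⊕ Fin n) :=
  Equiv.sumCongr (finRotate n) (finRotate n)

/-- A permutation of `{1,…,2n}` is connected if some cycle of it contains both an
element of `{1,…,n}` and an element of `{n+1,…,2n}`. -/
def IsConnectedPerm {n : ℕ} (β : Equiv.Perm (Fin n ⊕ Fin n)) : Prop :=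
  ∃ a b : Fin n, β.SameCycle (Sum.inl a) (Sum.inr b)

/-- `F_{n,n}(α,β) = Σᵢ (sᵢ|γ_{n,n}⁻¹αᵢ| + tᵢ|αᵢ|) + Σ_{i<j} e_{i,j}|βᵢ⁻¹βⱼ| + Σᵢ dᵢ|βᵢαᵢ⁻¹|`. -/
noncomputable def FnnPair (n k : ℕ) (s t d : Fin k → ℕ) (e : Fin k → Fin k → ℕ)
    (A B : Fin k → Equiv.Perm (Fin n ⊕ Fin n)) : ℕ :=
  (∑ i, (s i * permLen ((gammaNN n)⁻¹ * A i) + t i * permLen (A i)))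
    + (∑ i, ∑ j, if i < j then e i j * permLen ((B i)⁻¹ * B j) else 0)
    + (∑ i, d i * permLen (B i * (A i)⁻¹))

/-- `F_{n,n}(β) = Σᵢ (sᵢ|γ_{n,n}⁻¹βᵢ| + tᵢ|βᵢ|) + Σ_{i<j} e_{i,j}|βᵢ⁻¹βⱼ|`. -/
noncomputable def FnnOne (n k : ℕ) (s t : Fin k → ℕ) (e : Fin k → Fin k → ℕ)
    (B : Fin k → Equiv.Perm (Fin n ⊕ Fin n)) : ℕ :=
  (∑ i, (s i * permLen ((gammaNN n)⁻¹ * B i) + t i * permLen (B i)))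
    + (∑ i, ∑ j, if i < j then e i j * permLen ((B i)⁻¹ * B j) else 0)

/-- Vertices of the flow network: `Sum.inl i` are the inner vertices `1,…,k`,
`Sum.inr true` is the source and `Sum.inr false` is the sink. -/
abbrev NetVertex (k : ℕ) := Fin k ⊕ Bool

/-- The source of the flow network. -/
def netSrc (k : ℕ) : NetVertex k := Sum.inr true

/-- The sink of the flow network. -/
def netSnk (k : ℕ) : NetVertex k := Sum.inr false

/-- Capacities: `c(src,i) = sᵢ`, `c(i,snk) = tᵢ`, `c(i,j) = e_{i,j}` for `i ≠ j`,
and `0` on all other ordered pairs. -/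
def netCap {k : ℕ} (s t : Fin k → ℕ) (e : Fin k → Fin k → ℕ) :
    NetVertex k → NetVertex k → ℤ
  | Sum.inr true, Sum.inl i => s i
  | Sum.inl i, Sum.inr false => t i
  | Sum.inl i, Sum.inl j => if i = j then 0 else e i j
  | _, _ => 0

/-- A flow with respect to capacities `c`: bounded by capacities, skew-symmetric,
and conserved at every vertex other than the source and the sink. -/
def IsFlow {k : ℕ} (c f : NetVertex k → NetVertex k → ℤ) : Prop :=
  (∀ u v, f u v ≤ c u v) ∧ (∀ u v, f u v = - f v u) ∧
    (∀ u, u ≠ netSrc k → u ≠ netSnk k → ∑ v, f v u = 0)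

/-- The value `|f| = Σᵤ f(src, u)` of a flow. -/
def flowValue {k : ℕ} (f : NetVertex k → NetVertex k → ℤ) : ℤ :=
  ∑ u, f (netSrc k) u

/-!
Write `d σ τ = |σ⁻¹ τ|` for the Cayley distance on permutations of `{1,…,2n}`; it is a metric
and `d γ 1 = |γ| = 2n - 2`. Placing the source at `γ`, the sink at `1` and vertex `i` at a
permutation `xᵢ` gives the cost `Σ sᵢ d(γ,xᵢ) + tᵢ d(xᵢ,1) + Σ_{i<j} e_{ij} d(xᵢ,xⱼ)`, which is
`F_{n,n}(x)`; by the triangle inequality and the two identities for `dᵢ`, `F_{n,n}(α,β)`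
dominates this cost both for `x = α` and for `x = β`.

By weak duality, every potential that is `0` at the source, `2n - 2` at the sink and
`1`-Lipschitz for `d` — here the distance from `γ` capped at `2n - 2`, or the mirror image of
this measured from `1` — bounds `|f| (2n - 2)` by the cost. A connected permutation `C` lies at
least `2` off every geodesic from `γ` to `1`, i.e. `|γ⁻¹ C| + |C| ≥ 2n`: among the `|γ⁻¹ C|`
transpositions leading from `γ` to `C`, one has to merge the two cycles of `γ`. This excess
survives the capping, in the cost of the vertex of `C`, or of a neighbour of it, or of the edge
between them, and yields the extra `2`.
-/

namespace Setoid

variable {α : Type*} {r r' : Setoid α}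

theorem map_of_le_surjective (h : r ≤ r') : Function.Surjective (map_of_le h) := by
  rintro ⟨x⟩
  exact ⟨⟦x⟧, rfl⟩

theorem card_quotient_le_of_le [Finite α] (h : r ≤ r') :
    Nat.card (Quotient r') ≤ Nat.card (Quotient r) :=
  Nat.card_le_card_of_surjective _ (map_of_le_surjective h)

theorem card_quotient_lt_of_le [Finite α] (h : r ≤ r') {a b : α} (hab : r' a b)
    (hn : ¬ r a b) : Nat.card (Quotient r') < Nat.card (Quotient r) := by
  refine (card_quotient_le_of_le h).lt_of_ne fun hc => hn (Quotient.exact ?_)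
  exact ((map_of_le_surjective h).bijective_of_nat_card_le hc.ge).injective
    (Quotient.sound hab : (⟦a⟧ : Quotient r') = ⟦b⟧)

/-- Here `r'` coarsens `r` at most by merging classes with the class of `b`. -/
theorem card_quotient_le_add_one_of_le [Finite α] (h : r ≤ r') (b : α)
    (hr' : ∀ x y, r' x y → ¬ r x b → ¬ r y b → r x y) :
    Nat.card (Quotient r) ≤ Nat.card (Quotient r') + 1 := by
  classical
  let F : Quotient r → Option (Quotient r') := Quotient.lift
    (fun x => if r x b then none else some ⟦x⟧) fun x y hxy => by
      by_cases hx : r x b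
      · simp [hx, r.iseqv.trans (r.iseqv.symm hxy) hx]
      · have hy : ¬ r y b := fun hy => hx (r.iseqv.trans hxy hy)
        simpa [hx, hy] using Quotient.sound (h hxy)
  have hF : Function.Injective F := by
    refine Quotient.ind₂ fun x y hxy => Quotient.sound ?_
    simp only [F, Quotient.lift_mk] at hxy
    split_ifs at hxy with hx hy hy
    · exact r.iseqv.trans hx (r.iseqv.symm hy)
    · exact hr' x y (Quotient.exact (Option.some_injective _ hxy)) hx hy
  simpa using Nat.card_le_card_of_injective F hF

end Setoid

namespace Equiv.Perm

section SameCycle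

variable {α : Type*} {σ : Perm α} {a b x y : α}

theorem SameCycle.mem_of_mapsTo [Finite α] {s : Set α} (hs : Set.MapsTo σ s s) (hx : x ∈ s)
    (h : σ.SameCycle x y) : y ∈ s := by
  obtain ⟨i, rfl⟩ := h.exists_nat_pow_eq
  rw [coe_pow]
  exact hs.iterate i hx

variable [DecidableEq α] [Finite α]

theorem SameCycle.of_mul_swap (hab : σ.SameCycle a b) (h : (σ * swap a b).SameCycle x y) :
    σ.SameCycle x y := by
  refine h.mem_of_mapsTo (s := {z | σ.SameCycle x z}) (fun z (hz : σ.SameCycle x z) => ?_) .rfl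
  simp only [Set.mem_ofPred_eq, coe_mul, Function.comp_apply, sameCycle_apply_right,
    swap_apply_def]
  split_ifs with hza hzb
  · exact hz.trans (hza ▸ hab)
  · exact hz.trans (hzb ▸ hab.symm)
  · exact hz

theorem sameCycle_mul_swap_of_not_sameCycle (hab : ¬ σ.SameCycle a b) :
    (σ * swap a b).SameCycle a b := by
  classical
  have hret : ∃ i : ℕ, (σ ^ i) (σ a) = a := (sameCycle_apply_left.mpr .rfl).exists_nat_pow_eq
  -- the `σ * swap a b`-orbit of `b` runs through the `σ`-orbit of `a` until it returns to `a`
  have key : ∀ l ≤ Nat.find hret, (σ * swap a b).SameCycle b ((σ ^ l) (σ a)) := by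
    intro l
    induction l with
    | zero => exact fun _ => ⟨1, by simp⟩
    | succ l ih =>
      intro hl
      have hne_a : (σ ^ l) (σ a) ≠ a := Nat.find_min hret (by omega)
      have hne_b : (σ ^ l) (σ a) ≠ b := fun h =>
        hab (h ▸ sameCycle_pow_right.mpr (sameCycle_apply_right.mpr .rfl))
      have hstep : (σ * swap a b) ((σ ^ l) (σ a)) = (σ ^ (l + 1)) (σ a) := by
        rw [mul_apply, swap_apply_of_ne_of_ne hne_a hne_b, pow_succ', mul_apply]
      exact (ih (by omega)).trans (hstep ▸ sameCycle_apply_right.mpr .rfl)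
  simpa [Nat.find_spec hret] using (key _ le_rfl).symm

theorem SameCycle.mul_swap_of_not_sameCycle (hab : ¬ σ.SameCycle a b) (h : σ.SameCycle x y) :
    (σ * swap a b).SameCycle x y :=
  (sameCycle_mul_swap_of_not_sameCycle hab).of_mul_swap (by rwa [mul_swap_mul_self])

theorem SameCycle.of_mul_swap_or (h : (σ * swap a b).SameCycle x y) :
    σ.SameCycle x y ∨ σ.SameCycle x b ∨ (σ.SameCycle x a ∧ σ.SameCycle y b) := by
  refine h.mem_of_mapsTo (s := {z | σ.SameCycle x z ∨ σ.SameCycle x b ∨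
    (σ.SameCycle x a ∧ σ.SameCycle z b)}) (fun z hz => ?_) (.inl .rfl)
  simp only [Set.mem_ofPred_eq, coe_mul, Function.comp_apply, sameCycle_apply_right,
    sameCycle_apply_left, swap_apply_def] at hz ⊢
  split_ifs with hza hzb
  · subst hza
    rcases hz with hz | hz | hz
    exacts [.inr (.inr ⟨hz, .rfl⟩), .inr (.inl hz), .inr (.inr ⟨hz.1, .rfl⟩)]
  · subst hzb
    rcases hz with hz | hz | hz
    exacts [.inr (.inl hz), .inr (.inl hz), .inl hz.1]
  · exact hz

end SameCycle

section CycleCount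

variable {α : Type*} [DecidableEq α] [Fintype α] {σ : Perm α} {a b : α}

theorem cycleCount_eq_card_quotient (σ : Perm α) :
    cycleCount σ = Nat.card (Quotient (SameCycle.setoid σ)) := by
  let F : α → σ.cycleFactorsFinset ⊕ (σ.supportᶜ : Finset α) := fun x =>
    if hx : x ∈ σ.support then .inl ⟨σ.cycleOf x, cycleOf_mem_cycleFactorsFinset_iff.mpr hx⟩
    else .inr ⟨x, Finset.mem_compl.mpr hx⟩
  have hker : SameCycle.setoid σ = Setoid.ker F := by
    refine Setoid.ext fun x y => ?_
    change σ.SameCycle x y ↔ F x = F y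
    by_cases hx : x ∈ σ.support <;> by_cases hy : y ∈ σ.support <;>
      simp only [F, hx, hy, dite_true, dite_false, Sum.inl.injEq, Sum.inr.injEq,
        Subtype.mk.injEq, reduceCtorEq, iff_false]
    · exact ⟨SameCycle.cycleOf_eq, fun h =>
        ((mem_support_cycleOf_iff (f := σ)).mp (h ▸ mem_support_cycleOf_iff.mpr ⟨.rfl, hy⟩)).1⟩
    · exact fun h => hy (h.mem_support_iff.mp hx)
    · exact fun h => hx (h.mem_support_iff.mpr hy)
    · exact ⟨fun h => h.eq_of_left (notMem_support.mp hx), fun h => h ▸ .rfl⟩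
  have hF : Function.Surjective F := by
    rintro (⟨c, hc⟩ | ⟨x, hx⟩)
    · obtain ⟨x, hx⟩ := (mem_cycleFactorsFinset_iff.mp hc).1.nonempty_support
      have hxσ : x ∈ σ.support := mem_cycleFactorsFinset_support_le hc hx
      exact ⟨x, by simp only [F, dif_pos hxσ, cycle_is_cycleOf hx hc]⟩
    · exact ⟨x, by simp only [F, dif_neg (Finset.mem_compl.mp hx)]⟩
  rw [hker, Nat.card_congr (Setoid.quotientKerEquivOfSurjective F hF), Nat.card_sum,
    Nat.card_eq_fintype_card, Nat.card_eq_fintype_card, Fintype.card_coe, Fintype.card_coe,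
    Finset.card_compl, cycleCount, cycleType_def, Multiset.card_map]
  rfl

theorem cycleCount_le_card (σ : Perm α) : cycleCount σ ≤ Fintype.card α := by
  rw [cycleCount_eq_card_quotient, ← Nat.card_eq_fintype_card]
  exact Nat.card_le_card_of_surjective _ Quotient.mk_surjective

theorem cycleCount_mul_swap_lt (hab : ¬ σ.SameCycle a b) :
    cycleCount (σ * swap a b) < cycleCount σ := by
  rw [cycleCount_eq_card_quotient, cycleCount_eq_card_quotient]
  exact Setoid.card_quotient_lt_of_le (fun _ _ => SameCycle.mul_swap_of_not_sameCycle hab)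
    (sameCycle_mul_swap_of_not_sameCycle hab) hab

theorem cycleCount_lt_mul_swap (hab : σ.SameCycle a b) (hn : ¬ (σ * swap a b).SameCycle a b) :
    cycleCount σ < cycleCount (σ * swap a b) := by
  rw [cycleCount_eq_card_quotient, cycleCount_eq_card_quotient]
  exact Setoid.card_quotient_lt_of_le (fun _ _ => hab.of_mul_swap) hab hn

theorem cycleCount_mul_swap_le (σ : Perm α) (a b : α) :
    cycleCount (σ * swap a b) ≤ cycleCount σ + 1 := by
  set τ := σ * swap a b
  have hτ : τ * swap a b = σ := mul_swap_mul_self a b σ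
  rw [cycleCount_eq_card_quotient, cycleCount_eq_card_quotient]
  by_cases h : τ.SameCycle a b
  · exact (Setoid.card_quotient_le_of_le fun _ _ hxy => h.of_mul_swap (hτ ▸ hxy)).trans
      (Nat.le_succ _)
  · refine Setoid.card_quotient_le_add_one_of_le
      (fun _ _ hxy => hτ ▸ SameCycle.mul_swap_of_not_sameCycle h hxy) b fun x y hxy hx hy => ?_
    rcases (hτ ▸ hxy : (τ * swap a b).SameCycle x y).of_mul_swap_or with h' | h' | h'
    exacts [h', absurd h' hx, absurd h'.2 hy]

end CycleCount

section PermLen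

variable {α : Type*} [DecidableEq α] [Fintype α]

theorem exists_swap_factorization (σ : Perm α) :
    ∃ l : List (Perm α), (∀ τ ∈ l, τ.IsSwap) ∧ l.prod = σ ∧ l.length ≤ permLen σ := by
  induction h : permLen σ using Nat.strong_induction_on generalizing σ with
  | _ m ih =>
  by_cases hσ : σ = 1
  · exact ⟨[], by simp, by simp [hσ], by simp⟩
  obtain ⟨a, ha⟩ : ∃ a, σ a ≠ a := not_forall.mp fun h => hσ (Equiv.ext h)
  set b := σ⁻¹ a
  have hσb : σ b = a := by simp [b]
  have hab : a ≠ b := fun h => ha (by rwa [← h] at hσb)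
  -- `σ * swap a b` fixes `a`, so it splits the cycle of `a`
  have hfix : (σ * swap a b) a = a := by simp [hσb]
  have hlt := cycleCount_lt_mul_swap (⟨-1, by simp [b]⟩ : σ.SameCycle a b)
    fun hs => hab (hs.eq_of_left hfix)
  have hle := cycleCount_le_card (σ * swap a b)
  obtain ⟨l, hl, hprod, hlen⟩ := ih _ (by unfold permLen at h ⊢; omega) (σ * swap a b) rfl
  refine ⟨l ++ [swap a b], ?_, by simp [hprod], ?_⟩
  · simpa [or_imp, forall_and] using ⟨hl, ⟨a, b, hab, rfl⟩⟩
  · unfold permLen at h hlen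
    simp only [List.length_append, List.length_singleton]
    omega

theorem apply_mul_le_apply_add_permLen {Φ : Perm α → ℕ}
    (hΦ : ∀ σ a b, Φ (σ * swap a b) ≤ Φ σ + 1) (σ τ : Perm α) :
    Φ (σ * τ) ≤ Φ σ + permLen τ := by
  obtain ⟨l, hl, rfl, hlen⟩ := exists_swap_factorization τ
  suffices ∀ σ, Φ (σ * l.prod) ≤ Φ σ + l.length by linarith [this σ]
  clear hlen
  induction l with
  | nil => simp
  | cons τ l ih =>
    intro σ
    obtain ⟨a, b, -, rfl⟩ := hl τ List.mem_cons_self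
    have := ih (fun τ hτ => hl τ (List.mem_cons_of_mem _ hτ)) (σ * swap a b)
    rw [List.prod_cons, ← mul_assoc, List.length_cons]
    linarith [hΦ σ a b]

theorem permLen_inv (σ : Perm α) : permLen σ⁻¹ = permLen σ := by
  simp only [permLen, cycleCount, cycleType_inv, support_inv]

theorem permLen_mul_comm (σ τ : Perm α) : permLen (σ * τ) = permLen (τ * σ) := by
  have hconj : τ * σ = τ * (σ * τ) * τ⁻¹ := by group
  simp only [hconj, permLen, cycleCount, cycleType_conj, card_support_conj]

theorem permLen_mul_le (σ τ : Perm α) : permLen (σ * τ) ≤ permLen σ + permLen τ := by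
  have h := apply_mul_le_apply_add_permLen cycleCount_mul_swap_le (σ * τ) τ⁻¹
  rw [mul_inv_cancel_right, permLen_inv] at h
  have := cycleCount_le_card σ
  unfold permLen at h ⊢
  omega

end PermLen

theorem sumCongr_zpow {α β : Type*} (σ : Perm α) (τ : Perm β) (i : ℤ) :
    Equiv.sumCongr σ τ ^ i = Equiv.sumCongr (σ ^ i) (τ ^ i) :=
  (map_zpow (sumCongrHom α β) (σ, τ) i).symm

theorem SameCycle.sumCongr_inl {α β : Type*} {σ : Perm α} {a b : α} (τ : Perm β)
    (h : σ.SameCycle a b) : SameCycle (Equiv.sumCongr σ τ) (.inl a) (.inl b) := by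
  obtain ⟨i, hi⟩ := h
  exact ⟨i, by rw [sumCongr_zpow, Equiv.sumCongr_apply, Sum.map_inl, hi]⟩

theorem SameCycle.sumCongr_inr {α β : Type*} {τ : Perm β} {a b : β} (σ : Perm α)
    (h : τ.SameCycle a b) : SameCycle (Equiv.sumCongr σ τ) (.inr a) (.inr b) := by
  obtain ⟨i, hi⟩ := h
  exact ⟨i, by rw [sumCongr_zpow, Equiv.sumCongr_apply, Sum.map_inr, hi]⟩

theorem sameCycle_finRotate {n : ℕ} (a b : Fin n) : (finRotate n).SameCycle a b := by
  cases n with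
  | zero => exact a.elim0
  | succ n =>
    suffices h : ∀ i, (finRotate (n + 1)).SameCycle 0 i from (h a).symm.trans (h b)
    refine Fin.induction .rfl fun i ih => ?_
    simpa [finRotate_apply, Fin.coeSucc_eq_succ] using sameCycle_apply_right.mpr ih

end Equiv.Perm

section PermDist

variable {α : Type*} [DecidableEq α] [Fintype α]

noncomputable def permDist (σ τ : Equiv.Perm α) : ℕ := permLen (σ⁻¹ * τ)

theorem permDist_comm (σ τ : Equiv.Perm α) : permDist σ τ = permDist τ σ := by
  rw [permDist, permDist, ← Equiv.Perm.permLen_inv, mul_inv_rev, inv_inv]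

theorem permDist_triangle (σ τ ρ : Equiv.Perm α) :
    permDist σ ρ ≤ permDist σ τ + permDist τ ρ := by
  simpa only [permDist, mul_assoc, mul_inv_cancel_left] using
    Equiv.Perm.permLen_mul_le (σ⁻¹ * τ) (τ⁻¹ * ρ)

end PermDist

section Gamma

variable {n : ℕ}

theorem gammaNN_sameCycle_iff {x y : Fin n ⊕ Fin n} :
    (gammaNN n).SameCycle x y ↔ x.isLeft = y.isLeft := by
  refine ⟨fun h => Eq.symm (h.mem_of_mapsTo (s := {z : Fin n ⊕ Fin n | z.isLeft = x.isLeft})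
    (fun z hz => ?_) rfl : y.isLeft = x.isLeft), ?_⟩
  · simpa [gammaNN] using hz
  · rcases x with a | a <;> rcases y with b | b <;> simp only [Sum.isLeft_inl, Sum.isLeft_inr,
      Bool.false_eq_true, Bool.true_eq_false, IsEmpty.forall_iff, forall_const]
    · exact (Equiv.Perm.sameCycle_finRotate a b).sumCongr_inl _
    · exact (Equiv.Perm.sameCycle_finRotate a b).sumCongr_inr _

theorem not_isConnectedPerm_gammaNN : ¬ IsConnectedPerm (gammaNN n) := fun ⟨_, _, h⟩ =>
  absurd (gammaNN_sameCycle_iff.mp h) (by simp)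

theorem cycleCount_gammaNN (hn : 0 < n) : cycleCount (gammaNN n) = 2 := by
  have hker : Equiv.Perm.SameCycle.setoid (gammaNN n) = Setoid.ker Sum.isLeft :=
    Setoid.ext fun _ _ => gammaNN_sameCycle_iff
  have hsurj : Function.Surjective (Sum.isLeft : Fin n ⊕ Fin n → Bool) := by
    rintro (_ | _)
    exacts [⟨.inr ⟨0, hn⟩, rfl⟩, ⟨.inl ⟨0, hn⟩, rfl⟩]
  rw [Equiv.Perm.cycleCount_eq_card_quotient, hker,
    Nat.card_congr (Setoid.quotientKerEquivOfSurjective _ hsurj), Nat.card_eq_fintype_card,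
    Fintype.card_bool]

theorem permLen_gammaNN (hn : 0 < n) : permLen (gammaNN n) = 2 * n - 2 := by
  simp [permLen, cycleCount_gammaNN hn, two_mul]

theorem IsConnectedPerm.of_mul_swap {σ : Equiv.Perm (Fin n ⊕ Fin n)} {a b : Fin n ⊕ Fin n}
    (h : IsConnectedPerm (σ * Equiv.swap a b)) (hab : σ.SameCycle a b) : IsConnectedPerm σ :=
  let ⟨u, v, huv⟩ := h
  ⟨u, v, hab.of_mul_swap huv⟩

theorem cycleCount_mul_swap_lt_of_isConnectedPerm {σ : Equiv.Perm (Fin n ⊕ Fin n)}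
    {a b : Fin n ⊕ Fin n} (h : IsConnectedPerm (σ * Equiv.swap a b))
    (hσ : ¬ IsConnectedPerm σ) : cycleCount (σ * Equiv.swap a b) < cycleCount σ :=
  Equiv.Perm.cycleCount_mul_swap_lt fun hab => hσ (h.of_mul_swap hab)

theorem two_mul_le_permLen_add_permLen {C : Equiv.Perm (Fin n ⊕ Fin n)}
    (hC : IsConnectedPerm C) : 2 * n ≤ permLen ((gammaNN n)⁻¹ * C) + permLen C := by
  classical
  have hn : 0 < n := by
    obtain ⟨⟨i, hi⟩, -⟩ := hC
    omega
  -- `Φ` grows by at most one per transposition, since connecting the two halves merges cycles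
  let Φ : Equiv.Perm (Fin n ⊕ Fin n) → ℕ := fun σ =>
    cycleCount σ + if IsConnectedPerm σ then 2 else 0
  have hΦ : ∀ σ a b, Φ (σ * Equiv.swap a b) ≤ Φ σ + 1 := by
    intro σ a b
    have := Equiv.Perm.cycleCount_mul_swap_le σ a b
    by_cases h : IsConnectedPerm (σ * Equiv.swap a b) <;> by_cases hσ : IsConnectedPerm σ <;>
      simp only [Φ, h, hσ, if_true, if_false] <;> try omega
    have := cycleCount_mul_swap_lt_of_isConnectedPerm h hσ
    omega
  have hC' := Equiv.Perm.apply_mul_le_apply_add_permLen hΦ (gammaNN n) ((gammaNN n)⁻¹ * C)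
  simp only [Φ, mul_inv_cancel_left, hC, not_isConnectedPerm_gammaNN, cycleCount_gammaNN hn,
    if_true, if_false] at hC'
  have hcard := Equiv.Perm.cycleCount_le_card C
  simp only [Fintype.card_sum, Fintype.card_fin] at hcard
  simp only [permLen, Fintype.card_sum, Fintype.card_fin] at hC' ⊢
  omega

end Gamma

theorem Finset.sum_sum_eq_sum_sum_ite_lt {ι M : Type*} [Fintype ι] [LinearOrder ι]
    [AddCommMonoid M] (g : ι → ι → M) (hg : ∀ i, g i i = 0) :
    ∑ i, ∑ j, g i j = ∑ i, ∑ j, if i < j then g i j + g j i else 0 := by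
  have hsplit : ∀ i j, g i j = (if i < j then g i j else 0) + (if j < i then g i j else 0) := by
    intro i j
    rcases lt_trichotomy i j with h | rfl | h
    · simp [h, h.not_gt]
    · simp [hg]
    · simp [h, h.not_gt]
  have hswap : ∑ i, ∑ j, (if j < i then g i j else 0) = ∑ i, ∑ j, if i < j then g j i else 0 :=
    Finset.sum_comm
  rw [Finset.sum_congr rfl fun i _ => Finset.sum_congr rfl fun j _ => hsplit i j]
  simp only [Finset.sum_add_distrib, hswap, ite_add_zero]

theorem Finset.add_le_sum_of_ne {ι M : Type*} [Fintype ι] [DecidableEq ι] [AddCommMonoid M]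
    [PartialOrder M] [IsOrderedAddMonoid M] {f : ι → M} (hf : ∀ i, 0 ≤ f i) {i j : ι}
    (hij : i ≠ j) : f i + f j ≤ ∑ l, f l := by
  rw [← Finset.sum_pair hij]
  exact Finset.sum_le_sum_of_subset_of_nonneg (Finset.subset_univ _) fun l _ _ => hf l

def vertexSlack (s t : ℕ) (M q r : ℤ) : ℤ := s * q + t * r - (s * min q M + t * (M - min q M))

section VertexSlack

variable {s t : ℕ} {M q r : ℤ}

theorem vertexSlack_of_le (h : q ≤ M) : vertexSlack s t M q r = t * (q + r - M) := by
  rw [vertexSlack, min_eq_left h]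
  ring

theorem vertexSlack_of_lt (h : M < q) : vertexSlack s t M q r = s * (q - M) + t * r := by
  rw [vertexSlack, min_eq_right h.le]
  ring

theorem vertexSlack_nonneg (hqr : M ≤ q + r) (hrq : q ≤ M + r) : 0 ≤ vertexSlack s t M q r := by
  rcases le_or_gt q M with h | h
  · rw [vertexSlack_of_le h]
    exact mul_nonneg (by positivity) (by linarith)
  · rw [vertexSlack_of_lt h]
    exact add_nonneg (mul_nonneg (by positivity) (by linarith))
      (mul_nonneg (by positivity) (by linarith))

theorem one_le_vertexSlack (hst : 0 < s + t) (hrq : q ≤ M + r) (h : M < q) :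
    1 ≤ vertexSlack s t M q r := by
  rw [vertexSlack_of_lt h]
  have hs : (s : ℤ) ≤ s * (q - M) := le_mul_of_one_le_right (by positivity) (by omega)
  have ht : (t : ℤ) ≤ t * r := le_mul_of_one_le_right (by positivity) (by omega)
  have : (0 : ℤ) < s + t := by exact_mod_cast hst
  linarith

theorem abs_min_sub_min_le {a b M w : ℤ} (ha : a ≤ b + w) (hb : b ≤ a + w) :
    |min a M - min b M| ≤ w :=
  abs_sub_le_iff.2 ⟨by omega, by omega⟩

theorem abs_min_sub_min_lt {a b M w : ℤ} (haw : a ≤ b + w) (ha : M < a) (hb : b ≤ M) :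
    |min a M - min b M| < w := by
  rw [min_eq_right ha.le, min_eq_left hb, abs_of_nonneg (by omega)]
  omega

end VertexSlack

section Flow

variable {k : ℕ} {c f : NetVertex k → NetVertex k → ℤ}

theorem NetVertex.sum_eq (g : NetVertex k → ℤ) :
    ∑ v, g v = ∑ i, g (.inl i) + g (netSrc k) + g (netSnk k) := by
  rw [Fintype.sum_sum_type, Fintype.sum_bool, add_assoc]
  rfl

theorem IsFlow.sum_mul_inflow (hf : IsFlow c f) (φ : NetVertex k → ℤ) :
    ∑ v, φ v * ∑ u, f u v = flowValue f * (φ (netSnk k) - φ (netSrc k)) := by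
  obtain ⟨-, hskew, hcons⟩ := hf
  have hinner : ∀ i, ∑ u, f u (.inl i) = 0 := fun i => hcons _ (by simp [netSrc]) (by simp [netSnk])
  have hsrc : ∑ u, f u (netSrc k) = - flowValue f := by
    rw [flowValue, ← Finset.sum_neg_distrib]
    exact Finset.sum_congr rfl fun u _ => hskew u _
  have htotal : ∑ v, ∑ u, f u v = 0 := by
    have h : ∑ v, ∑ u, f u v = - ∑ v, ∑ u, f u v :=
      calc ∑ v, ∑ u, f u v = ∑ u, ∑ v, -f v u :=
            Finset.sum_comm.trans (Finset.sum_congr rfl fun u _ =>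
              Finset.sum_congr rfl fun v _ => hskew u v)
        _ = - ∑ v, ∑ u, f u v := by simp only [Finset.sum_neg_distrib]
    omega
  rw [NetVertex.sum_eq, Finset.sum_eq_zero fun i _ => hinner i, hsrc] at htotal
  rw [NetVertex.sum_eq, Finset.sum_eq_zero fun i _ => by rw [hinner i, mul_zero], hsrc]
  linear_combination (φ (netSnk k)) * htotal



theorem IsFlow.flowValue_mul_sub_le (hf : IsFlow c f) (φ : NetVertex k → ℤ) :
    flowValue f * (φ (netSnk k) - φ (netSrc k)) ≤ ∑ u, ∑ v, c u v * max (φ v - φ u) 0 := by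
  have hcap := hf.1
  have hskew := hf.2.1
  have hpair : ∀ u v,
      f u v * (φ v - φ u) ≤ c u v * max (φ v - φ u) 0 + c v u * max (φ u - φ v) 0 := by
    intro u v
    rcases le_total (φ u) (φ v) with h | h
    · rw [max_eq_left (sub_nonneg.2 h), max_eq_right (sub_nonpos.2 h), mul_zero, add_zero]
      exact mul_le_mul_of_nonneg_right (hcap u v) (sub_nonneg.2 h)
    · rw [max_eq_right (sub_nonpos.2 h), max_eq_left (sub_nonneg.2 h), mul_zero, zero_add,
        hskew u v, neg_mul, ← mul_neg, neg_sub]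
      exact mul_le_mul_of_nonneg_right (hcap v u) (sub_nonneg.2 h)
  have hout : ∑ u, ∑ v, f u v * φ u = - ∑ v, φ v * ∑ u, f u v := by
    rw [← Finset.sum_neg_distrib]
    refine Finset.sum_congr rfl fun u _ => ?_
    rw [Finset.mul_sum, ← Finset.sum_neg_distrib]
    exact Finset.sum_congr rfl fun v _ => by rw [hskew u v]; ring
  have hin : ∑ u, ∑ v, f u v * φ v = ∑ v, φ v * ∑ u, f u v := by
    rw [Finset.sum_comm]
    simp only [Finset.mul_sum, mul_comm]
  have hsum := Finset.sum_le_sum fun u (_ : u ∈ Finset.univ) =>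
    Finset.sum_le_sum fun v (_ : v ∈ Finset.univ) => hpair u v
  simp only [mul_sub, Finset.sum_sub_distrib, Finset.sum_add_distrib, hin, hout] at hsum
  rw [Finset.sum_comm (f := fun u v => c v u * max (φ u - φ v) 0), hf.sum_mul_inflow] at hsum
  linarith

variable {s t : Fin k → ℕ} {e : Fin k → Fin k → ℕ}

/-- `Σ_{u,v} c(u,v) max(φ v - φ u, 0)` for the potential `φ` that is `p` on the inner vertices,
`0` at the source and `M` at the sink. -/
def potentialCost (s t : Fin k → ℕ) (e : Fin k → Fin k → ℕ) (M : ℤ) (p : Fin k → ℤ) : ℤ :=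
  ∑ i, (s i * p i + t i * (M - p i)) + ∑ i, ∑ j, if i < j then e i j * |p i - p j| else 0

theorem IsFlow.flowValue_mul_le_potentialCost (hf : IsFlow (netCap s t e) f)
    (hsym : ∀ i j, i ≠ j → e i j = e j i) {M : ℤ} {p : Fin k → ℤ} (hp0 : ∀ i, 0 ≤ p i)
    (hpM : ∀ i, p i ≤ M) : flowValue f * M ≤ potentialCost s t e M p := by
  have h := hf.flowValue_mul_sub_le (Sum.elim p fun b => if b then 0 else M)
  have hedges : ∑ i, ∑ j, (if i = j then 0 else (e i j : ℤ)) * max (p j - p i) 0 =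
      ∑ i, ∑ j, if i < j then (e i j : ℤ) * |p i - p j| else 0 := by
    rw [Finset.sum_sum_eq_sum_sum_ite_lt _ fun i => by simp]
    refine Finset.sum_congr rfl fun i _ => Finset.sum_congr rfl fun j _ => ?_
    by_cases hij : i < j
    · rw [if_pos hij, if_pos hij, if_neg hij.ne, if_neg hij.ne', hsym j i hij.ne', ← mul_add,
        add_comm, ← neg_sub (p i) (p j), max_zero_add_max_neg_zero_eq_abs_self]
    · rw [if_neg hij, if_neg hij]
  simp only [NetVertex.sum_eq, netSrc, netSnk, netCap, Sum.elim_inl, Sum.elim_inr] at h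
  simp only [Bool.false_eq_true, if_false, if_true, zero_mul, add_zero, sub_zero,
    Finset.sum_const_zero, max_eq_left (hp0 _), max_eq_left (sub_nonneg.2 (hpM _))] at h
  rw [Finset.sum_add_distrib, hedges] at h
  rw [potentialCost, Finset.sum_add_distrib]
  linarith

theorem potentialCost_sub (M : ℤ) (p : Fin k → ℤ) :
    potentialCost s t e M (fun i => M - p i) = potentialCost t s e M p := by
  unfold potentialCost
  congr 1
  · exact Finset.sum_congr rfl fun i _ => by ring
  · refine Finset.sum_congr rfl fun i _ => Finset.sum_congr rfl fun j _ => ?_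
    rw [sub_sub_sub_cancel_left, abs_sub_comm]

theorem sum_add_sum_eq_potentialCost_add (M : ℤ) (q r : Fin k → ℤ) (w : Fin k → Fin k → ℤ) :
    ∑ i, (s i * q i + t i * r i) + ∑ i, ∑ j, (if i < j then e i j * w i j else 0) =
      potentialCost s t e M (fun i => min (q i) M) + (∑ i, vertexSlack (s i) (t i) M (q i) (r i) +
        ∑ i, ∑ j, if i < j then e i j * (w i j - |min (q i) M - min (q j) M|) else 0) := by
  simp only [potentialCost, vertexSlack, ← Finset.sum_add_distrib]
  refine Finset.sum_congr rfl fun i _ => ?_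
  have hsplit : (∑ j, if i < j then (e i j : ℤ) * w i j else 0) =
      (∑ j, if i < j then (e i j : ℤ) * |min (q i) M - min (q j) M| else 0) +
        ∑ j, if i < j then (e i j : ℤ) * (w i j - |min (q i) M - min (q j) M|) else 0 := by
    rw [← Finset.sum_add_distrib]
    exact Finset.sum_congr rfl fun j _ => by split_ifs <;> ring
  rw [hsplit]
  ring

/-- Here `q`, `r` and `w` stand for the distances to the source, to the sink and between inner
vertices. -/
theorem potentialCost_min_add_two_le {M : ℤ} {q r : Fin k → ℤ} {w : Fin k → Fin k → ℤ}
    (hqr : ∀ i, M ≤ q i + r i) (hrq : ∀ i, q i ≤ M + r i) (hqw : ∀ i j, q i ≤ q j + w i j)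
    (hw : ∀ i j, w i j = w j i) (hsym : ∀ i j, i ≠ j → e i j = e j i)
    (hst : ∀ i, 0 < s i + t i) {i₀ j₀ : Fin k} (hj : j₀ ≠ i₀) (he : 0 < e i₀ j₀)
    (hgen : M + 2 ≤ q i₀ + r i₀) (ht : 0 < t i₀) :
    potentialCost s t e M (fun i => min (q i) M) + 2 ≤
      ∑ i, (s i * q i + t i * r i) + ∑ i, ∑ j, if i < j then e i j * w i j else 0 := by
  rw [sum_add_sum_eq_potentialCost_add]
  set p : Fin k → ℤ := fun i => min (q i) M
  set es : Fin k → Fin k → ℤ := fun i j => if i < j then e i j * (w i j - |p i - p j|) else 0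
  suffices 2 ≤ ∑ i, vertexSlack (s i) (t i) M (q i) (r i) + ∑ i, ∑ j, es i j by linarith
  have hvs : ∀ i, 0 ≤ vertexSlack (s i) (t i) M (q i) (r i) := fun i =>
    vertexSlack_nonneg (hqr i) (hrq i)
  have hes : ∀ i j, 0 ≤ es i j := fun i j => by
    have hpw : |p i - p j| ≤ w i j := abs_min_sub_min_le (hqw i j) (hw i j ▸ hqw j i)
    simp only [es]
    split_ifs
    exacts [mul_nonneg (by positivity) (sub_nonneg.2 hpw), le_rfl]
  have hvs_sum := Finset.single_le_sum (fun i _ => hvs i) (Finset.mem_univ i₀)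
  have hes_sum : 0 ≤ ∑ i, ∑ j, es i j :=
    Finset.sum_nonneg fun i _ => Finset.sum_nonneg fun j _ => hes i j
  rcases le_or_gt (q i₀) M with h | h
  · -- `i₀` lies between source and sink, off the geodesic: its `t`-term pays `2`
    have : 2 ≤ vertexSlack (s i₀) (t i₀) M (q i₀) (r i₀) := by
      rw [vertexSlack_of_le h]
      nlinarith [(by exact_mod_cast ht : (0 : ℤ) < t i₀)]
    linarith
  have hvs₀ := one_le_vertexSlack (hst i₀) (hrq i₀) h
  rcases le_or_gt (q j₀) M with h' | h'
  · -- `i₀` lies beyond the sink and its neighbour `j₀` does not: the edge `i₀ j₀` pays `1`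
    have hslack : 1 ≤ (e i₀ j₀ : ℤ) * (w i₀ j₀ - |p i₀ - p j₀|) :=
      one_le_mul_of_one_le_of_one_le (by exact_mod_cast he)
        (by linarith [abs_min_sub_min_lt (hqw i₀ j₀) h h'])
    have hpair : 1 ≤ es i₀ j₀ + es j₀ i₀ := by
      rcases lt_or_gt_of_ne hj with hlt | hlt
      · simp only [es, if_pos hlt, if_neg hlt.not_gt, hsym j₀ i₀ hj, hw j₀ i₀, abs_sub_comm (p j₀)]
        linarith
      · simp only [es, if_pos hlt, if_neg hlt.not_gt]
        linarith
    have := Finset.add_le_sum_of_ne (f := fun ij : Fin k × Fin k => es ij.1 ij.2)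
      (fun ij => hes _ _) (i := (i₀, j₀)) (j := (j₀, i₀)) (by simp [hj.symm])
    rw [Fintype.sum_prod_type'] at this
    linarith
  · -- both lie beyond the sink: each pays `1`
    linarith [Finset.add_le_sum_of_ne hvs hj.symm, one_le_vertexSlack (hst j₀) (hrq j₀) h']

end Flow

section MetricCost

variable {X : Type*} {k : ℕ} {D : X → X → ℕ} {a b : X} {s t d : Fin k → ℕ}
  {e : Fin k → Fin k → ℕ} {x y : Fin k → X} {i₀ j₀ : Fin k}

/-- The network embedded in a space with distance `D`: the source at `a`, the sink at `b` and the
inner vertex `i` at `x i`. -/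
def vertexCost (D : X → X → ℕ) (a b : X) (s t : Fin k → ℕ) (x : Fin k → X) : ℕ :=
  ∑ i, (s i * D a (x i) + t i * D (x i) b)

def edgeCost (D : X → X → ℕ) (e : Fin k → Fin k → ℕ) (x : Fin k → X) : ℕ :=
  ∑ i, ∑ j, if i < j then e i j * D (x i) (x j) else 0

theorem vertexCost_comm (hcomm : ∀ y z, D y z = D z y) :
    vertexCost D b a t s x = vertexCost D a b s t x :=
  Finset.sum_congr rfl fun i _ => by rw [hcomm b, hcomm _ a, add_comm]

theorem vertexCost_le_add (hcomm : ∀ y z, D y z = D z y) (htri : ∀ y z w, D y w ≤ D y z + D z w)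
    (hd : ∀ i, d i = s i + t i) :
    vertexCost D a b s t y ≤ vertexCost D a b s t x + ∑ i, d i * D (x i) (y i) := by
  rw [vertexCost, vertexCost, ← Finset.sum_add_distrib]
  refine Finset.sum_le_sum fun i _ => ?_
  have h1 := htri a (x i) (y i)
  have h2 := htri (y i) (x i) b
  rw [hcomm (y i) (x i)] at h2
  rw [hd]
  nlinarith [Nat.mul_le_mul_left (s i) h1, Nat.mul_le_mul_left (t i) h2]

theorem edgeCost_le_add (hcomm : ∀ y z, D y z = D z y) (htri : ∀ y z w, D y w ≤ D y z + D z w)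
    (hsym : ∀ i j, i ≠ j → e i j = e j i) (hd : ∀ i, d i = ∑ j ∈ Finset.univ.erase i, e i j) :
    edgeCost D e x ≤ edgeCost D e y + ∑ i, d i * D (x i) (y i) := by
  have hspread : ∑ i, d i * D (x i) (y i) =
      ∑ i, ∑ j, if i < j then e i j * (D (x i) (y i) + D (x j) (y j)) else 0 := by
    calc ∑ i, d i * D (x i) (y i)
        = ∑ i, ∑ j, if i = j then 0 else e i j * D (x i) (y i) := by
          refine Finset.sum_congr rfl fun i _ => ?_
          rw [hd, Finset.sum_mul, ← Finset.filter_ne, Finset.sum_filter]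
          simp only [ite_not]
      _ = _ := Finset.sum_sum_eq_sum_sum_ite_lt _ fun i => if_pos rfl
      _ = _ := Finset.sum_congr rfl fun i _ => Finset.sum_congr rfl fun j _ => by
          by_cases hij : i < j
          · rw [if_pos hij, if_pos hij, if_neg hij.ne, if_neg hij.ne', hsym j i hij.ne', mul_add]
          · rw [if_neg hij, if_neg hij]
  rw [edgeCost, edgeCost, hspread, ← Finset.sum_add_distrib]
  refine Finset.sum_le_sum fun i _ => ?_
  rw [← Finset.sum_add_distrib]
  refine Finset.sum_le_sum fun j _ => ?_
  split_ifs
  · have h1 := htri (x i) (y i) (x j)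
    have h2 := htri (y i) (y j) (x j)
    rw [hcomm (y j) (x j)] at h2
    nlinarith [Nat.mul_le_mul_left (e i j) (h1.trans (Nat.add_le_add_left h2 _))]
  · simp

theorem potentialCost_add_two_le_cost (hcomm : ∀ y z, D y z = D z y)
    (htri : ∀ y z w, D y w ≤ D y z + D z w) (hsym : ∀ i j, i ≠ j → e i j = e j i)
    (hst : ∀ i, 0 < s i + t i) (hj : j₀ ≠ i₀) (he : 0 < e i₀ j₀)
    (hgen : D a b + 2 ≤ D a (x i₀) + D (x i₀) b) (ht : 0 < t i₀) :
    potentialCost s t e (D a b) (fun i => min (D a (x i) : ℤ) (D a b)) + 2 ≤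
      (vertexCost D a b s t x + edgeCost D e x : ℕ) := by
  have key := potentialCost_min_add_two_le (M := D a b) (q := fun i => (D a (x i) : ℤ))
    (r := fun i => (D (x i) b : ℤ)) (w := fun i j => (D (x i) (x j) : ℤ))
    (fun i => by exact_mod_cast htri a (x i) b)
    (fun i => by exact_mod_cast hcomm (x i) b ▸ htri a b (x i))
    (fun i j => by exact_mod_cast hcomm (x j) (x i) ▸ htri a (x j) (x i))
    (fun i j => by rw [hcomm]) hsym hst hj he (by exact_mod_cast hgen) ht
  simpa [vertexCost, edgeCost, Nat.cast_sum, Nat.cast_ite] using key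

theorem IsFlow.flowValue_mul_add_two_le_cost {f : NetVertex k → NetVertex k → ℤ}
    (hf : IsFlow (netCap s t e) f) (hcomm : ∀ y z, D y z = D z y)
    (htri : ∀ y z w, D y w ≤ D y z + D z w) (hsym : ∀ i j, i ≠ j → e i j = e j i)
    (hst : ∀ i, 0 < s i + t i) (hj : j₀ ≠ i₀) (he : 0 < e i₀ j₀)
    (hgen : D a b + 2 ≤ D a (x i₀) + D (x i₀) b) :
    flowValue f * D a b + 2 ≤ (vertexCost D a b s t x + edgeCost D e x : ℕ) := by
  rcases Nat.eq_zero_or_pos (t i₀) with ht | ht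
  · -- the mirror image: measure the potential from the sink
    have hflow := hf.flowValue_mul_le_potentialCost hsym (M := D a b)
      (p := fun i => D a b - min (D b (x i) : ℤ) (D a b)) (fun i => by simp)
      (fun i => by simp)
    rw [potentialCost_sub] at hflow
    have hcost := potentialCost_add_two_le_cost (a := b) (b := a) (s := t) (t := s) (x := x)
      hcomm htri hsym (fun i => by rw [add_comm]; exact hst i) hj he
      (by rw [hcomm b a, hcomm b (x i₀), hcomm (x i₀) a]; omega) (by have := hst i₀; omega)
    rw [hcomm b a, vertexCost_comm hcomm] at hcost
    linarith
  · have hflow := hf.flowValue_mul_le_potentialCost hsym (M := D a b)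
      (p := fun i => min (D a (x i) : ℤ) (D a b)) (fun i => by simp) (fun i => by simp)
    linarith [potentialCost_add_two_le_cost hcomm htri hsym hst hj he hgen ht]

end MetricCost

section Fnn

variable {n k : ℕ} {s t d : Fin k → ℕ} {e : Fin k → Fin k → ℕ}
  {A B : Fin k → Equiv.Perm (Fin n ⊕ Fin n)}

theorem FnnOne_eq_cost :
    FnnOne n k s t e B = vertexCost permDist (gammaNN n) 1 s t B + edgeCost permDist e B := by
  simp [FnnOne, vertexCost, edgeCost, permDist, Equiv.Perm.permLen_inv]

theorem FnnPair_eq_cost : FnnPair n k s t d e A B = vertexCost permDist (gammaNN n) 1 s t A +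
    edgeCost permDist e B + ∑ i, d i * permDist (A i) (B i) := by
  simp [FnnPair, vertexCost, edgeCost, permDist, Equiv.Perm.permLen_inv,
    Equiv.Perm.permLen_mul_comm (B _)]

theorem FnnOne_left_le_FnnPair (hsym : ∀ i j, i ≠ j → e i j = e j i)
    (hd : ∀ i, d i = ∑ j ∈ Finset.univ.erase i, e i j) :
    FnnOne n k s t e A ≤ FnnPair n k s t d e A B := by
  rw [FnnOne_eq_cost, FnnPair_eq_cost, add_assoc]
  exact Nat.add_le_add_left (edgeCost_le_add permDist_comm permDist_triangle hsym hd) _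

theorem FnnOne_right_le_FnnPair (hd : ∀ i, d i = s i + t i) :
    FnnOne n k s t e B ≤ FnnPair n k s t d e A B := by
  rw [FnnOne_eq_cost, FnnPair_eq_cost, add_right_comm]
  exact Nat.add_le_add_right (vertexCost_le_add permDist_comm permDist_triangle hd) _

theorem FnnOne_connected_flow_bound {f : NetVertex k → NetVertex k → ℤ}
    (hf : IsFlow (netCap s t e) f) (hsym : ∀ i j, i ≠ j → e i j = e j i)
    (hst : ∀ i, 0 < s i + t i) (he : ∀ i, 0 < ∑ j ∈ Finset.univ.erase i, e i j) {i₀ : Fin k}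
    (hB : IsConnectedPerm (B i₀)) :
    flowValue f * (2 * n - 2) + 2 ≤ (FnnOne n k s t e B : ℤ) := by
  obtain ⟨j₀, hj₀, hej₀⟩ := Finset.sum_pos_iff.mp (he i₀)
  have hn : 0 < n := by
    obtain ⟨⟨i, hi⟩, -⟩ := hB
    omega
  have hgen := two_mul_le_permLen_add_permLen hB
  have hM : (permDist (gammaNN n) 1 : ℤ) = 2 * n - 2 := by
    rw [permDist, mul_one, Equiv.Perm.permLen_inv, permLen_gammaNN hn]
    omega
  rw [FnnOne_eq_cost, ← hM]
  exact hf.flowValue_mul_add_two_le_cost permDist_comm permDist_triangle hsym hst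
    (Finset.ne_of_mem_erase hj₀) hej₀
    (by simp only [permDist, mul_one, Equiv.Perm.permLen_inv, permLen_gammaNN hn]; omega)

end Fnn

theorem FnnPair_connected_flow_bound_general (n k : ℕ)
    (s t d : Fin k → ℕ) (e : Fin k → Fin k → ℕ)
    (hsym : ∀ i j, i ≠ j → e i j = e j i)
    (hd : ∀ i, d i = s i + t i)
    (hd' : ∀ i, d i = ∑ j ∈ Finset.univ.erase i, e i j)
    (hst : ∀ i, 0 < s i + t i)
    (he : ∀ i, 0 < ∑ j ∈ Finset.univ.erase i, e i j)
    (A B : Fin k → Equiv.Perm (Fin n ⊕ Fin n))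
    (hconn : (∃ i, IsConnectedPerm (A i)) ∨ (∃ i, IsConnectedPerm (B i))) :
    (∀ (f : NetVertex k → NetVertex k → ℤ), IsFlow (netCap s t e) f →
        flowValue f * (2 * n - 2) + 2 ≤ (FnnPair n k s t d e A B : ℤ)) ∧
      (∀ X : ℤ, IsGreatest {v : ℤ | ∃ f, IsFlow (netCap s t e) f ∧ flowValue f = v} X →
        X * (2 * n - 2) - (FnnPair n k s t d e A B : ℤ) ≤ -2) := by
  have hflow : ∀ f, IsFlow (netCap s t e) f →
      flowValue f * (2 * n - 2) + 2 ≤ (FnnPair n k s t d e A B : ℤ) := by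
    intro f hf
    rcases hconn with ⟨i₀, hA⟩ | ⟨i₀, hB⟩
    · exact (FnnOne_connected_flow_bound hf hsym hst he hA).trans
        (by exact_mod_cast FnnOne_left_le_FnnPair hsym hd')
    · exact (FnnOne_connected_flow_bound hf hsym hst he hB).trans
        (by exact_mod_cast FnnOne_right_le_FnnPair hd)
  refine ⟨hflow, fun X ⟨⟨f, hf, hX⟩, _⟩ => ?_⟩
  linarith [hX ▸ hflow f hf]

theorem FnnPair_connected_flow_bound (n k : ℕ) (hn : 1 ≤ n) (hk : 1 ≤ k)
    (s t d : Fin k → ℕ) (e : Fin k → Fin k → ℕ)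
    (hsym : ∀ i j, i ≠ j → e i j = e j i)
    (hd : ∀ i, d i = s i + t i)
    (hd' : ∀ i, d i = ∑ j ∈ Finset.univ.erase i, e i j)
    (hst : ∀ i, 0 < s i + t i)
    (he : ∀ i, 0 < ∑ j ∈ Finset.univ.erase i, e i j)
    (A B : Fin k → Equiv.Perm (Fin n ⊕ Fin n))
    (hconn : (∃ i, IsConnectedPerm (A i)) ∨ (∃ i, IsConnectedPerm (B i))) :
    (∀ (f : NetVertex k → NetVertex k → ℤ), IsFlow (netCap s t e) f →
        flowValue f * (2 * n - 2) + 2 ≤ (FnnPair n k s t d e A B : ℤ)) ∧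
      (∀ X : ℤ, IsGreatest {v : ℤ | ∃ f, IsFlow (netCap s t e) f ∧ flowValue f = v} X →
        X * (2 * n - 2) - (FnnPair n k s t d e A B : ℤ) ≤ -2) :=
  FnnPair_connected_flow_bound_general n k s t d e hsym hd hd' hst he A B hconn
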